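/- arXiv:2308.10081 — 2 statements merged into one kernel-verified Lean document; each statement's English description precedes it below -/
import Mathlib

section
/- Fix d ∈ ℕ and j. Let ρ_ref : ℝ^d → ℝ be continuously differentiable, let a_j ∈ ℝ^d and let A_j be a symmetric positive definite d×d real matrix. For t ∈ [0,1] let A_{j,t} := t A_j + (1−t) Id_d (which is symmetric positive definite, hence invertible), ρ_{j,t}(x) := |det A_{j,t}|⁻¹ ρ_ref(A_{j,t}⁻¹(x − t a_j)) and v_{j,t}(x) := a_j + (A_j − Id_d) A_{j,t}⁻¹(x − t a_j). Then the family (ρ_{j,t}) solves the continuity equation with velocity field v_{j,t}: for every t ∈ [0,1] and every x ∈ ℝ^d, (∂/∂t) ρ_{j,t}(x) + div_x (ρ_{j,t} v_{j,t})(x) = 0, where div_x F(x) := Σ_{i=1}^d ∂F_i/∂x_i (x) denotes the spatial divergence of the vector field F(x) = ρ_{j,t}(x) v_{j,t}(x). -/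
/-!
Write `A_t = t • A + (1 - t) • 1 = 1 + t • M` with `M = A - 1`. Jacobi's formula along this line
gives `∂ₜ |det A_t|⁻¹ = -|det A_t|⁻¹ tr (A_t⁻¹ M)`, and differentiating the inverse gives
`∂ₜ (A_t⁻¹ (x - t a)) = -A_t⁻¹ v_t(x)`. In space, `v_t` is affine with linear part `M A_t⁻¹`, so
`div (ρ_t v_t) = ρ_t tr (M A_t⁻¹) + Dρ_t (v_t)`, and `Dρ_t (v_t) = |det A_t|⁻¹ Dρ_ref (A_t⁻¹ v_t)`.
The two traces agree by cyclicity, so the time and space terms cancel.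
-/

open Matrix

open scoped ComplexOrder in
theorem Matrix.PosDef.smul_add_one_sub_smul_one {𝕜 : Type*} [RCLike 𝕜] {n : Type*} [Fintype n]
    [DecidableEq n] {A : Matrix n n 𝕜} (hA : A.PosDef) {t : ℝ} (h₀ : 0 ≤ t) (h₁ : t ≤ 1) :
    (t • A + (1 - t) • (1 : Matrix n n 𝕜)).PosDef := by
  rcases h₀.eq_or_lt with rfl | h₀
  · simpa using PosDef.one
  · exact (hA.smul h₀).add_posSemidef (PosSemidef.one.smul (sub_nonneg.2 h₁))

section MatrixCalculus

variable {𝕜 : Type*} [NontriviallyNormedField 𝕜] {m n : Type*} [Fintype n]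

def Matrix.mulVecL (P : Matrix m n 𝕜) : (n → 𝕜) →L[𝕜] m → 𝕜 :=
  ⟨P.mulVecLin, P.mulVecLin.continuous_on_pi⟩

@[simp]
theorem Matrix.mulVecL_apply (P : Matrix m n 𝕜) (v : n → 𝕜) : P.mulVecL v = P *ᵥ v :=
  rfl

theorem Matrix.hasFDerivAt_mulVec_sub [Fintype m] (P : Matrix m n 𝕜) (c x : n → 𝕜) :
    HasFDerivAt (fun y => P *ᵥ (y - c)) P.mulVecL x :=
  P.mulVecL.hasFDerivAt.comp x ((hasFDerivAt_id x).sub_const c)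

theorem HasDerivAt.matrix_mulVec {P : 𝕜 → Matrix m n 𝕜} {P' : Matrix m n 𝕜}
    {w : 𝕜 → n → 𝕜} {w' : n → 𝕜} {t : 𝕜} (hP : HasDerivAt P P' t) (hw : HasDerivAt w w' t) :
    HasDerivAt (fun s => P s *ᵥ w s) (P' *ᵥ w t + P t *ᵥ w') t := by
  refine hasDerivAt_pi.2 fun i => ?_
  have hentry : ∀ k, HasDerivAt (fun s => P s i k) (P' i k) t := fun k =>
    hasDerivAt_pi.1 (hasDerivAt_pi.1 hP i) k
  simp only [mulVec, dotProduct, Pi.add_apply, ← Finset.sum_add_distrib]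
  exact HasDerivAt.fun_sum fun k _ => (hentry k).mul (hasDerivAt_pi.1 hw k)

variable [DecidableEq n]

theorem HasDerivAt.matrix_inv [CompleteSpace 𝕜] {B : 𝕜 → Matrix n n 𝕜} {B' : Matrix n n 𝕜}
    {t : 𝕜} (hB : HasDerivAt B B' t) (ht : IsUnit (B t).det) :
    HasDerivAt (fun s => (B s)⁻¹) (-((B t)⁻¹ * B' * (B t)⁻¹)) t := by
  -- Matrices carry no global norm, but `HasDerivAt` only sees the product topology, so any
  -- normed-algebra structure inducing it gives access to `hasFDerivAt_ringInverse`.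
  let _ := Matrix.linftyOpNormedRing (n := n) (α := 𝕜)
  let _ := Matrix.linftyOpNormedAlgebra (n := n) (R := 𝕜) (α := 𝕜)
  -- completeness has to be passed explicitly: instance search does not match it to the local norm
  have : HasSummableGeomSeries (Matrix n n 𝕜) :=
    @instHasSummableGeomSeriesOfCompleteSpace _ _ (FiniteDimensional.complete 𝕜 _)
  obtain ⟨u, hu⟩ := (Matrix.isUnit_iff_isUnit_det _).2 ht
  have hinv := hasFDerivAt_ringInverse (𝕜 := 𝕜) u
  rw [← Ring.inverse_unit, hu, ← Matrix.nonsing_inv_eq_ringInverse] at hinv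
  have hcomp := hinv.comp_hasDerivAt t hB
  simp only [Matrix.nonsing_inv_eq_ringInverse] at hcomp ⊢
  exact hcomp

open Polynomial in
theorem Matrix.hasDerivAt_det_one_add_smul_zero (N : Matrix n n 𝕜) :
    HasDerivAt (fun r : 𝕜 => (1 + r • N).det) N.trace 0 := by
  have hpoly : (fun r : 𝕜 => (1 + r • N).det)
      = fun r => (det (1 + (X : 𝕜[X]) • N.map C)).eval r := by
    funext r
    simp [eval_det, ← smul_eq_mul_diagonal]
  rw [hpoly, ← derivative_det_one_add_X_smul]
  exact Polynomial.hasDerivAt _ 0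

theorem Matrix.hasDerivAt_det_one_add_smul (M : Matrix n n 𝕜) {t : 𝕜}
    (ht : IsUnit (1 + t • M).det) :
    HasDerivAt (fun s : 𝕜 => (1 + s • M).det)
      ((1 + t • M).det * trace ((1 + t • M)⁻¹ * M)) t := by
  set B := 1 + t • M
  have hfactor : ∀ s : 𝕜, 1 + s • M = B * (1 + (s - t) • (B⁻¹ * M)) := by
    intro s
    rw [mul_add, mul_one, mul_smul_comm, ← mul_assoc, mul_nonsing_inv B ht, one_mul]
    module
  simp only [hfactor, det_mul]
  have hdet := HasDerivAt.comp_sub_const t t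
    ((sub_self t).symm ▸ hasDerivAt_det_one_add_smul_zero (B⁻¹ * M))
  exact hdet.const_mul B.det

theorem Matrix.hasDerivAt_inv_one_add_smul_mulVec [CompleteSpace 𝕜] (M : Matrix n n 𝕜)
    (a x : n → 𝕜) {t : 𝕜} (ht : IsUnit (1 + t • M).det) :
    HasDerivAt (fun s => (1 + s • M)⁻¹ *ᵥ (x - s • a))
      (-((1 + t • M)⁻¹ *ᵥ (a + M *ᵥ ((1 + t • M)⁻¹ *ᵥ (x - t • a))))) t := by
  have hline : HasDerivAt (fun s : 𝕜 => 1 + s • M) M t := by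
    refine hasDerivAt_pi.2 fun i => hasDerivAt_pi.2 fun k => ?_
    simpa using ((hasDerivAt_id t).mul_const (M i k)).const_add ((1 : Matrix n n 𝕜) i k)
  have hshift : HasDerivAt (fun s : 𝕜 => x - s • a) (-a) t := by
    simpa using ((hasDerivAt_id t).smul_const a).const_sub x
  convert (hline.matrix_inv ht).matrix_mulVec hshift using 1
  simp only [mulVec_add, mulVec_neg, neg_mulVec, ← mulVec_mulVec]
  abel

end MatrixCalculus

theorem Matrix.hasDerivAt_abs_det_inv_one_add_smul {n : Type*} [Fintype n] [DecidableEq n]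
    (M : Matrix n n ℝ) {t : ℝ} (ht : IsUnit (1 + t • M).det) :
    HasDerivAt (fun s : ℝ => |(1 + s • M).det|⁻¹)
      (-(|(1 + t • M).det|⁻¹ * trace ((1 + t • M)⁻¹ * M))) t := by
  have hdet₀ : (1 + t • M).det ≠ 0 := ht.ne_zero
  have habs := (hasDerivAt_abs hdet₀).comp t (hasDerivAt_det_one_add_smul M ht)
  refine (habs.inv (abs_ne_zero.2 hdet₀)).congr_deriv ?_
  rw [Function.comp_apply, ← mul_assoc, sign_mul_self]
  field_simp

section Divergence

variable {𝕜 : Type*} [NontriviallyNormedField 𝕜] {n : Type*} [Fintype n] [DecidableEq n]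

noncomputable def divergence (V : (n → 𝕜) → n → 𝕜) (x : n → 𝕜) : 𝕜 :=
  ∑ i, fderiv 𝕜 (fun y => V y i) x (Pi.single i 1)

theorem divergence_smul {f : (n → 𝕜) → 𝕜} {V : (n → 𝕜) → n → 𝕜} {x : n → 𝕜}
    (hf : DifferentiableAt 𝕜 f x) (hV : DifferentiableAt 𝕜 V x) :
    divergence (fun y => f y • V y) x = f x * divergence V x + fderiv 𝕜 f x (V x) := by
  have hexpand : fderiv 𝕜 f x (V x) = ∑ i, V x i * fderiv 𝕜 f x (Pi.single i 1) := by
    conv_lhs => rw [pi_eq_sum_univ' (V x)]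
    simp only [map_sum, map_smul, smul_eq_mul]
  simp only [divergence, Pi.smul_apply, smul_eq_mul]
  rw [hexpand, Finset.mul_sum, ← Finset.sum_add_distrib]
  refine Finset.sum_congr rfl fun i _ => ?_
  rw [fderiv_fun_mul hf (differentiableAt_pi.1 hV i)]
  simp

theorem divergence_affine (a c : n → 𝕜) (N : Matrix n n 𝕜) (x : n → 𝕜) :
    divergence (fun y => a + N *ᵥ (y - c)) x = N.trace := by
  have hV := (N.hasFDerivAt_mulVec_sub c x).const_add a
  simp only [divergence, fderiv_apply hV.differentiableAt, hV.fderiv]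
  simp [Matrix.trace]

end Divergence

section ComponentDensity

variable {n : Type*} [Fintype n] [DecidableEq n]

def interpMatrix (A : Matrix n n ℝ) (t : ℝ) : Matrix n n ℝ :=
  t • A + (1 - t) • 1

omit [Fintype n] in
theorem interpMatrix_eq_one_add_smul (A : Matrix n n ℝ) (t : ℝ) :
    interpMatrix A t = 1 + t • (A - 1) := by
  unfold interpMatrix
  module

noncomputable def componentDensity (ρ : (n → ℝ) → ℝ) (A : Matrix n n ℝ) (a : n → ℝ) (t : ℝ)
    (x : n → ℝ) : ℝ :=
  |(interpMatrix A t).det|⁻¹ * ρ ((interpMatrix A t)⁻¹ *ᵥ (x - t • a))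

noncomputable def componentVelocity (A : Matrix n n ℝ) (a : n → ℝ) (t : ℝ) (x : n → ℝ) :
    n → ℝ :=
  a + (A - 1) *ᵥ ((interpMatrix A t)⁻¹ *ᵥ (x - t • a))

variable {ρ : (n → ℝ) → ℝ} {A : Matrix n n ℝ} {a : n → ℝ} {t : ℝ} {x : n → ℝ}

theorem hasDerivAt_componentDensity
    (hρ : DifferentiableAt ℝ ρ ((interpMatrix A t)⁻¹ *ᵥ (x - t • a)))
    (ht : IsUnit (interpMatrix A t).det) :
    HasDerivAt (componentDensity ρ A a · x)
      (-(componentDensity ρ A a t x * trace ((interpMatrix A t)⁻¹ * (A - 1))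
        + |(interpMatrix A t).det|⁻¹ * fderiv ℝ ρ ((interpMatrix A t)⁻¹ *ᵥ (x - t • a))
          ((interpMatrix A t)⁻¹ *ᵥ componentVelocity A a t x))) t := by
  simp only [componentDensity, componentVelocity, interpMatrix_eq_one_add_smul] at hρ ht ⊢
  have hcomp := hρ.hasFDerivAt.comp_hasDerivAt t (hasDerivAt_inv_one_add_smul_mulVec _ a x ht)
  refine ((hasDerivAt_abs_det_inv_one_add_smul _ ht).mul hcomp).congr_deriv ?_
  simp only [Function.comp_apply, map_neg]
  ring

theorem divergence_componentDensity_smul_componentVelocity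
    (hρ : DifferentiableAt ℝ ρ ((interpMatrix A t)⁻¹ *ᵥ (x - t • a))) :
    divergence (fun y => componentDensity ρ A a t y • componentVelocity A a t y) x
      = componentDensity ρ A a t x * trace ((A - 1) * (interpMatrix A t)⁻¹)
        + |(interpMatrix A t).det|⁻¹ * fderiv ℝ ρ ((interpMatrix A t)⁻¹ *ᵥ (x - t • a))
          ((interpMatrix A t)⁻¹ *ᵥ componentVelocity A a t x) := by
  have hdensity : HasFDerivAt (componentDensity ρ A a t)
      (|(interpMatrix A t).det|⁻¹ • (fderiv ℝ ρ ((interpMatrix A t)⁻¹ *ᵥ (x - t • a))).comp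
        (interpMatrix A t)⁻¹.mulVecL) x :=
    (hρ.hasFDerivAt.comp x ((interpMatrix A t)⁻¹.hasFDerivAt_mulVec_sub (t • a) x)).const_mul _
  have hvelocity : componentVelocity A a t
      = fun y => a + ((A - 1) * (interpMatrix A t)⁻¹) *ᵥ (y - t • a) := by
    funext y
    simp [componentVelocity, mulVec_mulVec]
  have hvelocity_diff : DifferentiableAt ℝ (componentVelocity A a t) x := by
    rw [hvelocity]
    exact ((hasFDerivAt_mulVec_sub _ _ x).const_add a).differentiableAt
  rw [divergence_smul hdensity.differentiableAt hvelocity_diff, hdensity.fderiv, hvelocity,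
    divergence_affine]
  simp

end ComponentDensity

/-- Each mixture component `ρ_{j,t}(x) = |det A_{j,t}|⁻¹ ρ_ref (A_{j,t}⁻¹ (x - t a_j))`
solves the continuity equation `∂ₜ ρ_{j,t} + div_x (ρ_{j,t} v_{j,t}) = 0` with velocity
field `v_{j,t}(x) = a_j + (A_j - Id) A_{j,t}⁻¹ (x - t a_j)`, where
`A_{j,t} = t A_j + (1-t) Id`. -/
theorem component_continuity_equation
    (d : ℕ) (ρref : (Fin d → ℝ) → ℝ) (hρref : ContDiff ℝ 1 ρref)
    (a : Fin d → ℝ) (A : Matrix (Fin d) (Fin d) ℝ) (hA : A.PosDef) :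
    ∀ t ∈ Set.Icc (0 : ℝ) 1, ∀ x : Fin d → ℝ,
      deriv (fun s : ℝ =>
          |((s • A + (1 - s) • (1 : Matrix (Fin d) (Fin d) ℝ)).det)|⁻¹ *
            ρref ((s • A + (1 - s) • (1 : Matrix (Fin d) (Fin d) ℝ))⁻¹.mulVec (x - s • a))) t
        + ∑ i : Fin d,
            fderiv ℝ (fun y : Fin d → ℝ =>
                (|((t • A + (1 - t) • (1 : Matrix (Fin d) (Fin d) ℝ)).det)|⁻¹ *
                  ρref ((t • A + (1 - t) • (1 : Matrix (Fin d) (Fin d) ℝ))⁻¹.mulVec (y - t • a)))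
                * (a + (A - 1).mulVec
                    ((t • A + (1 - t) • (1 : Matrix (Fin d) (Fin d) ℝ))⁻¹.mulVec (y - t • a))) i)
              x (Pi.single i 1)
        = 0 := by
  intro t ht x
  have hunit : IsUnit (interpMatrix A t).det :=
    (hA.smul_add_one_sub_smul_one ht.1 ht.2).det_pos.ne'.isUnit
  have hρ := hρref.differentiable one_ne_zero ((interpMatrix A t)⁻¹ *ᵥ (x - t • a))
  change deriv (componentDensity ρref A a · x) t
      + divergence (fun y => componentDensity ρref A a t y • componentVelocity A a t y) x = 0
  rw [(hasDerivAt_componentDensity hρ hunit).deriv,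
    divergence_componentDensity_smul_componentVelocity hρ, trace_mul_comm]
  ring
end

section
/- Fix d, J ∈ ℕ. Let C be a symmetric positive definite d×d real matrix, let a_1,…,a_J ∈ ℝ^d and let w_1,…,w_J ∈ ℝ be real weights (possibly negative) with Σ_{j=1}^J w_j = 1. If the mixture ρ_tar(x) := Σ_{j=1}^J w_j G[a_j, C](x) satisfies ρ_tar(x) > 0 for all x ∈ ℝ^d, then for every t ∈ [0,1] the intermediate density ρ_t(x) := Σ_{j=1}^J w_j G[t a_j, C](x) also satisfies ρ_t(x) > 0 for all x ∈ ℝ^d. -/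
/-! The Mehler (Ornstein–Uhlenbeck) kernel `K_t(x, u) = exp (-|x - t u|² / (2 (1 - t²)))`, with
`|v|² = vᵀ C⁻¹ v`, maps `G[a, C]` to `Z · G[t a, C](x)`: completing the square in `u`,
`G[a, C](u) K_t(x, u)` is `G[t a, C](x)` times a translate of `exp (-|u|² / (2 (1 - t²)))`,
whose integral `Z > 0` does not depend on `a`. Hence `Z ρ_t(x) = ∫ ρ_tar(u) K_t(x, u) du > 0`. -/

open Matrix Real

/-- The Gaussian density `G[m,C](x) = (2π)^{-d/2} (det C)^{-1/2} exp(-½ (x-m)ᵀ C⁻¹ (x-m))`. -/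
noncomputable def gaussianDensity {d : ℕ} (m : Fin d → ℝ) (C : Matrix (Fin d) (Fin d) ℝ)
    (x : Fin d → ℝ) : ℝ :=
  (2 * Real.pi) ^ (-(d : ℝ) / 2) * C.det ^ (-(1 : ℝ) / 2) *
    Real.exp (-(1 / 2) * ((x - m) ⬝ᵥ C⁻¹.mulVec (x - m)))

open MeasureTheory

theorem LinearMap.BilinForm.IsSymm.mehler_completeSquare {R M : Type*} [CommRing R]
    [AddCommGroup M] [Module R M] {B : LinearMap.BilinForm R M} (hB : B.IsSymm)
    {s t : R} (hst : s + t ^ 2 = 1) (a u x : M) :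
    s * B (u - a) (u - a) + B (x - t • u) (x - t • u) =
      B (u - (s • a + t • x)) (u - (s • a + t • x)) + s * B (x - t • a) (x - t • a) := by
  simp only [map_sub, map_add, map_smul, LinearMap.sub_apply, LinearMap.add_apply,
    LinearMap.smul_apply, smul_eq_mul]
  rw [hB.eq a u, hB.eq x u, hB.eq x a]
  linear_combination (B u u - s * B a a - B x x) * hst

theorem Matrix.PosDef.exists_pos_mul_dotProduct_self_le {n : Type*} [Fintype n]
    {A : Matrix n n ℝ} (hA : A.PosDef) :
    ∃ m, 0 < m ∧ ∀ v : n → ℝ, m * (v ⬝ᵥ v) ≤ v ⬝ᵥ A *ᵥ v := by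
  set K := {v : n → ℝ | v ⬝ᵥ v = 1}
  have hK : IsCompact K := by
    refine Metric.isCompact_of_isClosed_isBounded (isClosed_eq (by fun_prop) continuous_const) ?_
    refine (Metric.isBounded_closedBall (x := 0) (r := 1)).subset fun v (hv : v ⬝ᵥ v = 1) => ?_
    rw [mem_closedBall_zero_iff, pi_norm_le_iff_of_nonneg zero_le_one]
    intro i
    rw [Real.norm_eq_abs, ← sq_le_one_iff_abs_le_one, sq, ← hv]
    exact Finset.single_le_sum (f := fun j => v j * v j) (fun j _ => mul_self_nonneg _)
      (Finset.mem_univ i)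
  obtain ⟨m, hm, hmK⟩ := hK.exists_forall_le' (f := fun v => v ⬝ᵥ A *ᵥ v) (by fun_prop)
    fun v (hv : v ⬝ᵥ v = 1) => hA.dotProduct_mulVec_pos (by rintro rfl; simp at hv)
  refine ⟨m, hm, fun v => ?_⟩
  rcases eq_or_ne v 0 with rfl | hv
  · simp
  have hvv : 0 < v ⬝ᵥ v := (Finset.sum_nonneg fun i _ => mul_self_nonneg (v i)).lt_of_ne
    (Ne.symm (dotProduct_self_eq_zero.not.2 hv))
  set r := √(v ⬝ᵥ v)
  have hr2 : r ^ 2 = v ⬝ᵥ v := sq_sqrt hvv.le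
  have hr : r ≠ 0 := (Real.sqrt_pos.2 hvv).ne'
  have hmv := hmK (r⁻¹ • v) <| show (r⁻¹ • v) ⬝ᵥ (r⁻¹ • v) = 1 by
    simp only [smul_dotProduct, dotProduct_smul, smul_eq_mul, ← hr2]
    field_simp
  simp only [mulVec_smul, dotProduct_smul, smul_dotProduct, smul_eq_mul] at hmv
  field_simp at hmv
  rwa [le_div_iff₀ (by positivity), hr2] at hmv

theorem Matrix.PosDef.integrable_exp_neg_mul_dotProduct_mulVec {n : Type*} [Fintype n]
    {A : Matrix n n ℝ} (hA : A.PosDef) {c : ℝ} (hc : 0 < c) :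
    Integrable fun v : n → ℝ => exp (-c * (v ⬝ᵥ A *ᵥ v)) := by
  obtain ⟨m, hm, hmA⟩ := hA.exists_pos_mul_dotProduct_self_le
  have hdom : Integrable fun v : n → ℝ => ∏ i, exp (-(c * m) * v i ^ 2) :=
    Integrable.fintype_prod fun _ => integrable_exp_neg_mul_sq (by positivity)
  refine hdom.mono' (by fun_prop) (.of_forall fun v => ?_)
  rw [Real.norm_of_nonneg (exp_pos _).le, ← exp_sum, exp_le_exp, ← Finset.mul_sum]
  have := hmA v
  simp only [dotProduct, ← sq] at this ⊢
  nlinarith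

theorem MeasureTheory.integral_pos_of_forall_pos {α : Type*} [MeasurableSpace α] {μ : Measure α}
    [NeZero μ] {f : α → ℝ} (hf : ∀ x, 0 < f x) (hfi : Integrable f μ) : 0 < ∫ x, f x ∂μ := by
  rw [integral_pos_iff_support_of_nonneg (fun x => (hf x).le) hfi,
    Function.support_eq_univ fun x => (hf x).ne']
  exact Measure.measure_univ_pos.2 (NeZero.ne μ)

section Mehler

variable {d : ℕ} {C : Matrix (Fin d) (Fin d) ℝ} {t : ℝ}

noncomputable def mehlerKernel (C : Matrix (Fin d) (Fin d) ℝ) (t : ℝ) (x u : Fin d → ℝ) : ℝ :=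
  exp (-(2 * (1 - t ^ 2))⁻¹ * ((x - t • u) ⬝ᵥ C⁻¹ *ᵥ (x - t • u)))

theorem mehlerKernel_pos (C : Matrix (Fin d) (Fin d) ℝ) (t : ℝ) (x u : Fin d → ℝ) :
    0 < mehlerKernel C t x u :=
  exp_pos _

theorem gaussianDensity_mul_mehlerKernel (hC : C.IsSymm) (ht : t ^ 2 ≠ 1) (a x u : Fin d → ℝ) :
    gaussianDensity a C u * mehlerKernel C t x u =
      gaussianDensity (t • a) C x * exp (-(2 * (1 - t ^ 2))⁻¹ *
        ((u - ((1 - t ^ 2) • a + t • x)) ⬝ᵥ C⁻¹ *ᵥ (u - ((1 - t ^ 2) • a + t • x)))) := by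
  have key := (isSymm_toBilin'_iff_isSymm.2 hC.inv).mehler_completeSquare
    (s := 1 - t ^ 2) (t := t) (by ring) a u x
  simp only [toBilin'_apply'] at key
  have hs : 1 - t ^ 2 ≠ 0 := sub_ne_zero.2 (Ne.symm ht)
  unfold gaussianDensity mehlerKernel
  rw [mul_assoc, mul_assoc, mul_assoc, mul_assoc, ← exp_add, ← exp_add]
  congr 3
  field_simp
  linear_combination -key

theorem integrable_gaussianDensity_mul_mehlerKernel (hC : C.PosDef) (ht : t ^ 2 < 1)
    (a x : Fin d → ℝ) : Integrable fun u => gaussianDensity a C u * mehlerKernel C t x u := by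
  simp_rw [gaussianDensity_mul_mehlerKernel (isHermitian_iff_isSymm.1 hC.isHermitian) ht.ne a x]
  have hc : 0 < (2 * (1 - t ^ 2))⁻¹ := by simp only [inv_pos]; linarith
  exact ((hC.inv.integrable_exp_neg_mul_dotProduct_mulVec hc).comp_sub_right _).const_mul _

theorem integral_gaussianDensity_mul_mehlerKernel (hC : C.IsSymm) (ht : t ^ 2 ≠ 1)
    (a x : Fin d → ℝ) :
    ∫ u, gaussianDensity a C u * mehlerKernel C t x u =
      gaussianDensity (t • a) C x * ∫ u, exp (-(2 * (1 - t ^ 2))⁻¹ * (u ⬝ᵥ C⁻¹ *ᵥ u)) := by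
  simp_rw [gaussianDensity_mul_mehlerKernel hC ht a x]
  rw [integral_const_mul,
    integral_sub_right_eq_self fun u => exp (-(2 * (1 - t ^ 2))⁻¹ * (u ⬝ᵥ C⁻¹ *ᵥ u))]

variable {ι : Type*} [Fintype ι] (w : ι → ℝ) (a : ι → Fin d → ℝ) (x : Fin d → ℝ)

theorem integrable_mixture_mul_mehlerKernel (hC : C.PosDef) (ht : t ^ 2 < 1) :
    Integrable fun u => (∑ j, w j * gaussianDensity (a j) C u) * mehlerKernel C t x u := by
  simp_rw [Finset.sum_mul, mul_assoc]
  exact integrable_finsetSum _ fun j _ =>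
    (integrable_gaussianDensity_mul_mehlerKernel hC ht (a j) x).const_mul (w j)

theorem integral_mixture_mul_mehlerKernel (hC : C.PosDef) (ht : t ^ 2 < 1) :
    ∫ u, (∑ j, w j * gaussianDensity (a j) C u) * mehlerKernel C t x u =
      (∑ j, w j * gaussianDensity (t • a j) C x) *
        ∫ u, exp (-(2 * (1 - t ^ 2))⁻¹ * (u ⬝ᵥ C⁻¹ *ᵥ u)) := by
  simp_rw [Finset.sum_mul, mul_assoc]
  rw [integral_finsetSum _ fun j _ =>
    (integrable_gaussianDensity_mul_mehlerKernel hC ht (a j) x).const_mul (w j)]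
  simp_rw [integral_const_mul,
    integral_gaussianDensity_mul_mehlerKernel (isHermitian_iff_isSymm.1 hC.isHermitian) ht.ne]

end Mehler

theorem intermediate_Gaussian_mixture_positive_general
    (d J : ℕ) (C : Matrix (Fin d) (Fin d) ℝ) (hC : C.PosDef)
    (a : Fin J → Fin d → ℝ) (w : Fin J → ℝ)
    (hpos : ∀ x : Fin d → ℝ, 0 < ∑ j : Fin J, w j * gaussianDensity (a j) C x) :
    ∀ t ∈ Set.Icc (0 : ℝ) 1, ∀ x : Fin d → ℝ,
      0 < ∑ j : Fin J, w j * gaussianDensity (t • a j) C x := by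
  rintro t ⟨ht0, ht1⟩ x
  rcases ht1.eq_or_lt with rfl | ht1
  · simpa using hpos x
  have ht : t ^ 2 < 1 := by nlinarith
  have hZ : 0 < ∫ u, exp (-(2 * (1 - t ^ 2))⁻¹ * (u ⬝ᵥ C⁻¹ *ᵥ u)) :=
    integral_exp_pos <| hC.inv.integrable_exp_neg_mul_dotProduct_mulVec <| by
      simp only [inv_pos]; linarith
  have hρK := integral_pos_of_forall_pos (fun u => mul_pos (hpos u) (mehlerKernel_pos C t x u))
    (integrable_mixture_mul_mehlerKernel w a x hC ht)
  rw [integral_mixture_mul_mehlerKernel w a x hC ht] at hρK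
  exact pos_of_mul_pos_left hρK hZ.le

/-- If a signed Gaussian mixture `ρ_tar = ∑ j, w_j G[a_j, C]` (common covariance, weights
summing to one but possibly negative) is strictly positive, then so are all intermediate
densities `ρ_t = ∑ j, w_j G[t a_j, C]` for `t ∈ [0,1]`. -/
theorem intermediate_Gaussian_mixture_positive
    (d J : ℕ) (C : Matrix (Fin d) (Fin d) ℝ) (hC : C.PosDef)
    (a : Fin J → Fin d → ℝ) (w : Fin J → ℝ) (hw1 : ∑ j : Fin J, w j = 1)
    (hpos : ∀ x : Fin d → ℝ, 0 < ∑ j : Fin J, w j * gaussianDensity (a j) C x) :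
    ∀ t ∈ Set.Icc (0 : ℝ) 1, ∀ x : Fin d → ℝ,
      0 < ∑ j : Fin J, w j * gaussianDensity (t • a j) C x :=
  intermediate_Gaussian_mixture_positive_general d J C hC a w hpos
end
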